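/- Assume irreflexivity of the orderings <_α on worms. Let A, A₁, …, A_I be worms with all modalities ≥ α such that for each i, GLP_Λ does not prove A → A_i. Then GLP_Λ proves (A ∧ (A₁ ∨ ⋯ ∨ A_I)) → ⟨α⟩A. -/

import Mathlib

inductive Formula (L : Type) : Type where
  | bot : Formula L
  | var : Nat → Formula L
  | imp : Formula L → Formula L → Formula L
  | box : L → Formula L → Formula L

namespace Formula

variable {L : Type}

def neg (φ : Formula L) : Formula L := imp φ bot
def top : Formula L := neg bot
def and (φ ψ : Formula L) : Formula L := neg (imp φ ψ.neg)
def or (φ ψ : Formula L) : Formula L := imp φ.neg ψ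
def iff (φ ψ : Formula L) : Formula L := (imp φ ψ).and (imp ψ φ)
def dia (α : L) (φ : Formula L) : Formula L := neg (box α φ.neg)

end Formula

open Formula

/-- Provability in the polymodal provability logic `GLP_Λ` over a linear order. -/
inductive GLP {L : Type} [LinearOrder L] : Formula L → Prop where
  | k1 : ∀ φ ψ : Formula L, GLP (φ.imp (ψ.imp φ))
  | k2 : ∀ φ ψ χ : Formula L, GLP ((φ.imp (ψ.imp χ)).imp ((φ.imp ψ).imp (φ.imp χ)))
  | k3 : ∀ φ ψ : Formula L, GLP ((φ.neg.imp ψ.neg).imp (ψ.imp φ))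
  | dist : ∀ (α : L) (φ ψ : Formula L), GLP ((Formula.box α (φ.imp ψ)).imp ((Formula.box α φ).imp (Formula.box α ψ)))
  | lob : ∀ (α : L) (φ : Formula L), GLP ((Formula.box α ((Formula.box α φ).imp φ)).imp (Formula.box α φ))
  | trans : ∀ (α β : L) (φ : Formula L), α ≤ β → GLP ((Formula.box α φ).imp (Formula.box β (Formula.box α φ)))
  | negintro : ∀ (α β : L) (φ : Formula L), α < β → GLP ((dia α φ).imp (Formula.box β (dia α φ)))
  | mono : ∀ (α β : L) (φ : Formula L), α ≤ β → GLP ((Formula.box α φ).imp (Formula.box β φ))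
  | mp : ∀ φ ψ : Formula L, GLP (φ.imp ψ) → GLP φ → GLP ψ
  | nec : ∀ (α : L) (φ : Formula L), GLP φ → GLP (Formula.box α φ)

/-- The worm (iterated consistency statement) associated to a list of modalities. -/
def worm {L : Type} : List L → Formula L
  | [] => Formula.top
  | α :: w => Formula.dia α (worm w)

/-- `Lt α A B` iff `GLP ⊢ B → ⟨α⟩A`. -/
def Lt {L : Type} [LinearOrder L] (α : L) (A B : List L) : Prop :=
  GLP ((worm B).imp (Formula.dia α (worm A)))

def Le {L : Type} [LinearOrder L] (α : L) (A B : List L) : Prop :=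
  Lt α A B ∨ A = B

def disjWorms {L : Type} (l : List (List L)) : Formula L :=
  (l.map worm).foldr Formula.or Formula.bot

/-!
Split a worm `A ∈ 𝕎_γ` as `A₀ ++ R`, where every modality of `A₀` exceeds `γ` and `R` is empty or
starts with `γ`; then `A ↔ A₀ ∧ R`, and by `⟨δ⟩φ ∧ ⟨γ⟩ψ → ⟨δ⟩(φ ∧ ⟨γ⟩ψ)` for `γ < δ` the worm `A`
lies `γ`-below anything implying `⟨δ⟩A₀ ∧ R`. Splitting two worms at the least modality occurring in
them and comparing heads and tails by induction on total length shows that `<_γ` is total on `𝕎_γ`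
up to equivalence, and that `A ∧ B` is equivalent to a worm made of the modalities of `A` and `B`.

Write `A ∧ Aᵢ ≡ C` with `C ∈ 𝕎_α` and compare `C` with `A`: `C ≡ A` gives `A → Aᵢ`, and `C <_α A`
gives `A → ⟨α⟩C → ⟨α⟩A`, contradicting irreflexivity. So `A <_α C`, i.e. `A ∧ Aᵢ → ⟨α⟩A`.
-/

open Formula

notation:25 φ:26 " ⟹ " ψ:25 => GLP (Formula.imp φ ψ)

namespace GLP

variable {L : Type} [LinearOrder L] {Γ : List (Formula L)} {φ ψ χ ρ : Formula L}

/-- Necessitation is not applied to hypotheses, so the deduction theorem holds. -/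
inductive Derives (Γ : List (Formula L)) : Formula L → Prop
  | ax {φ : Formula L} : GLP φ → Derives Γ φ
  | hyp {φ : Formula L} : φ ∈ Γ → Derives Γ φ
  | mp {φ ψ : Formula L} : Derives Γ (φ.imp ψ) → Derives Γ φ → Derives Γ ψ

theorem imp_refl (φ : Formula L) : φ ⟹ φ :=
  mp _ _ (mp _ _ (k2 φ (φ.imp φ) φ) (k1 φ (φ.imp φ))) (k1 φ φ)

namespace Derives

theorem hyp₀ : Derives (φ :: Γ) φ := hyp (List.mem_cons_self ..)

theorem hyp₁ : Derives (ψ :: φ :: Γ) φ := hyp (by simp)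

theorem hyp₂ : Derives (χ :: ψ :: φ :: Γ) φ := hyp (by simp)

theorem cons (d : Derives Γ ψ) : Derives (φ :: Γ) ψ := by
  induction d with
  | ax h => exact ax h
  | hyp h => exact hyp (List.mem_cons_of_mem _ h)
  | mp _ _ ih₁ ih₂ => exact mp ih₁ ih₂

theorem deduction (d : Derives (φ :: Γ) ψ) : Derives Γ (φ.imp ψ) := by
  induction d with
  | ax h => exact mp (ax (k1 _ φ)) (ax h)
  | hyp h =>
    rcases List.mem_cons.1 h with rfl | h
    · exact ax (imp_refl _)
    · exact mp (ax (k1 _ φ)) (hyp h)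
  | mp _ _ ih₁ ih₂ => exact mp (mp (ax (k2 _ _ _)) ih₁) ih₂

theorem efq (d : Derives Γ bot) : Derives Γ φ :=
  mp (mp (ax (k3 φ bot)) (deduction (deduction hyp₀))) d

theorem by_contra (d : Derives (φ.neg :: Γ) bot) : Derives Γ φ :=
  have h : Derives Γ (φ.neg.imp φ.neg.neg.neg) :=
    deduction (deduction (mp hyp₀ hyp₁))
  mp (mp (ax (k3 φ φ.neg.neg)) h) (deduction d)

theorem and_intro (d₁ : Derives Γ φ) (d₂ : Derives Γ ψ) : Derives Γ (φ.and ψ) :=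
  deduction (mp (mp hyp₀ d₁.cons) d₂.cons)

theorem and_left (d : Derives Γ (φ.and ψ)) : Derives Γ φ :=
  by_contra (mp d.cons (deduction (efq (mp hyp₁ hyp₀))))

theorem and_right (d : Derives Γ (φ.and ψ)) : Derives Γ ψ :=
  by_contra (mp d.cons (deduction hyp₁))

theorem or_elim (d : Derives Γ (φ.or ψ)) (d₁ : Derives (φ :: Γ) χ) (d₂ : Derives (ψ :: Γ) χ) :
    Derives Γ χ := by
  refine by_contra (mp hyp₀ (mp (deduction d₂).cons (mp d.cons ?_)))
  exact deduction (mp hyp₁ (mp (deduction d₁).cons.cons hyp₀))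

end Derives

theorem of_derives_nil (d : Derives [] φ) : GLP φ := by
  induction d with
  | ax h => exact h
  | hyp h => simp at h
  | mp _ _ ih₁ ih₂ => exact mp _ _ ih₁ ih₂

theorem imp_trans (h₁ : φ ⟹ ψ) (h₂ : ψ ⟹ χ) : φ ⟹ χ :=
  of_derives_nil (.deduction (.mp (.ax h₂) (.mp (.ax h₁) .hyp₀)))

theorem and_left (φ ψ : Formula L) : φ.and ψ ⟹ φ :=
  of_derives_nil (.deduction (.and_left .hyp₀))

theorem and_right (φ ψ : Formula L) : φ.and ψ ⟹ ψ :=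
  of_derives_nil (.deduction (.and_right .hyp₀))

theorem imp_and (h₁ : χ ⟹ φ) (h₂ : χ ⟹ ψ) : χ ⟹ φ.and ψ :=
  of_derives_nil (.deduction (.and_intro (.mp (.ax h₁) .hyp₀) (.mp (.ax h₂) .hyp₀)))

theorem imp_top (φ : Formula L) : φ ⟹ top :=
  of_derives_nil (.deduction (.deduction .hyp₀))

theorem bot_imp (φ : Formula L) : bot ⟹ φ :=
  of_derives_nil (.deduction (.efq .hyp₀))

theorem contrapose (h : φ ⟹ ψ) : ψ.neg ⟹ φ.neg :=
  of_derives_nil (.deduction (.deduction (.mp .hyp₁ (.mp (.ax h) .hyp₀))))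

theorem imp_neg_neg (φ : Formula L) : φ ⟹ φ.neg.neg :=
  of_derives_nil (.deduction (.deduction (.mp .hyp₀ .hyp₁)))

theorem neg_neg_imp (φ : Formula L) : φ.neg.neg ⟹ φ :=
  of_derives_nil (.deduction (.by_contra (.mp .hyp₁ .hyp₀)))

theorem and_or_imp (h₁ : χ.and φ ⟹ ρ) (h₂ : χ.and ψ ⟹ ρ) : χ.and (φ.or ψ) ⟹ ρ := by
  refine of_derives_nil (.deduction (.or_elim (.and_right .hyp₀) ?_ ?_))
  · exact .mp (.ax h₁) (.and_intro (.and_left .hyp₁) .hyp₀)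
  · exact .mp (.ax h₂) (.and_intro (.and_left .hyp₁) .hyp₀)

theorem box_mono (α : L) (h : φ ⟹ ψ) : box α φ ⟹ box α ψ :=
  mp _ _ (dist α φ ψ) (nec α _ h)

theorem dia_mono (α : L) (h : φ ⟹ ψ) : dia α φ ⟹ dia α ψ :=
  contrapose (box_mono α (contrapose h))

theorem dia_anti {α β : L} (φ : Formula L) (h : α ≤ β) : dia β φ ⟹ dia α φ :=
  contrapose (mono α β φ.neg h)

theorem dia_dia_of_le {α γ : L} (φ : Formula L) (h : γ ≤ α) : dia α (dia γ φ) ⟹ dia γ φ := by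
  have h' : (dia γ φ).neg ⟹ box α (dia γ φ).neg :=
    imp_trans (neg_neg_imp _) (imp_trans (trans γ α φ.neg h) (box_mono α (imp_neg_neg _)))
  exact imp_trans (contrapose h') (neg_neg_imp _)

theorem dia_and_box (β : L) (φ ψ : Formula L) : (dia β φ).and (box β ψ) ⟹ dia β (φ.and ψ) := by
  have h : (φ.and ψ).neg ⟹ ψ.imp φ.neg :=
    of_derives_nil (.deduction (.deduction (.deduction
      (.mp .hyp₂ (.and_intro .hyp₀ .hyp₁)))))
  refine of_derives_nil (.deduction (.deduction (.mp (.and_left .hyp₁) ?_)))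
  exact .mp (.mp (.ax (dist β ψ φ.neg)) (.mp (.ax (box_mono β h)) .hyp₀))
    (.and_right .hyp₁)

theorem dia_and_dia_of_lt {γ δ : L} (φ ψ : Formula L) (h : γ < δ) :
    (dia δ φ).and (dia γ ψ) ⟹ dia δ (φ.and (dia γ ψ)) :=
  imp_trans (imp_and (and_left _ _) (imp_trans (and_right _ _) (negintro γ δ ψ h)))
    (dia_and_box _ _ _)

end GLP

namespace Worm

open GLP

variable {L : Type} [LinearOrder L] {γ δ : L} {A A₀ B B₀ R RA RB : List L} {φ : Formula L}

theorem worm_append_imp_left (A R : List L) : worm (A ++ R) ⟹ worm A := by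
  induction A with
  | nil => exact imp_top _
  | cons a A ih => exact dia_mono a ih

theorem dia_worm_imp_of_head_le {a : L} (hR : ∀ ρ ∈ R.head?, ρ ≤ a) :
    dia a (worm R) ⟹ worm R := by
  rcases R with _ | ⟨ρ, R⟩
  · exact imp_top _
  · exact dia_dia_of_le _ (hR ρ rfl)

theorem dia_and_worm_imp (hR : ∀ ρ ∈ R.head?, ρ < δ) (φ : Formula L) :
    (dia δ φ).and (worm R) ⟹ dia δ (φ.and (worm R)) := by
  rcases R with _ | ⟨ρ, R⟩
  · exact imp_trans (and_left _ _) (dia_mono δ (imp_and (imp_refl _) (imp_top _)))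
  · exact dia_and_dia_of_lt _ _ (hR ρ rfl)

theorem worm_append_imp_right (hA : ∀ β ∈ A, γ < β) (hR : ∀ ρ ∈ R.head?, ρ ≤ γ) :
    worm (A ++ R) ⟹ worm R := by
  induction A with
  | nil => exact imp_refl _
  | cons a A ih =>
    rw [List.forall_mem_cons] at hA
    exact imp_trans (dia_mono a (ih hA.2))
      (dia_worm_imp_of_head_le fun ρ hρ => (hR ρ hρ).trans hA.1.le)

theorem and_imp_worm_append (hA : ∀ β ∈ A, γ < β) (hR : ∀ ρ ∈ R.head?, ρ ≤ γ) :
    (worm A).and (worm R) ⟹ worm (A ++ R) := by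
  induction A with
  | nil => exact and_right _ _
  | cons a A ih =>
    rw [List.forall_mem_cons] at hA
    exact imp_trans (dia_and_worm_imp (fun ρ hρ => (hR ρ hρ).trans_lt hA.1) _)
      (dia_mono a (ih hA.2))

theorem imp_worm_append (hA : ∀ β ∈ A, γ < β) (hR : ∀ ρ ∈ R.head?, ρ ≤ γ)
    (h₁ : φ ⟹ worm A) (h₂ : φ ⟹ worm R) : φ ⟹ worm (A ++ R) :=
  imp_trans (imp_and h₁ h₂) (and_imp_worm_append hA hR)

theorem imp_dia_worm_append (hγδ : γ < δ) (hA : ∀ β ∈ A, γ < β) (hR : ∀ ρ ∈ R.head?, ρ ≤ γ)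
    (h₁ : φ ⟹ dia δ (worm A)) (h₂ : φ ⟹ worm R) : φ ⟹ dia γ (worm (A ++ R)) :=
  imp_trans (imp_and h₁ h₂) <|
    imp_trans (dia_and_worm_imp (fun ρ hρ => (hR ρ hρ).trans_lt hγδ) _) <|
      imp_trans (dia_mono δ (and_imp_worm_append hA hR)) (dia_anti _ hγδ.le)

theorem exists_split (hA : ∀ β ∈ A, γ ≤ β) :
    ∃ A₀ R, A = A₀ ++ R ∧ (∀ β ∈ A₀, γ < β) ∧ ∀ ρ ∈ R.head?, ρ ≤ γ := by
  induction A with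
  | nil => exact ⟨[], [], rfl, by simp, by simp⟩
  | cons a A ih =>
    rw [List.forall_mem_cons] at hA
    rcases hA.1.lt_or_eq with h | rfl
    · obtain ⟨A₀, R, rfl, hA₀, hR⟩ := ih hA.2
      exact ⟨a :: A₀, R, rfl, List.forall_mem_cons.2 ⟨h, hA₀⟩, hR⟩
    · exact ⟨[], _ :: A, rfl, by simp, by simp⟩

theorem length_add_length_lt (hA₀ : ∀ β ∈ A₀, γ < β) (hB₀ : ∀ β ∈ B₀, γ < β)
    (hγ : γ ∈ A₀ ++ RA ++ (B₀ ++ RB)) :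
    A₀.length + B₀.length < (A₀ ++ RA).length + (B₀ ++ RB).length := by
  have hR : RA ≠ [] ∨ RB ≠ [] := by
    by_contra! h
    obtain ⟨rfl, rfl⟩ := h
    rcases List.mem_append.1 (by simpa using hγ) with h | h
    exacts [lt_irrefl γ (hA₀ γ h), lt_irrefl γ (hB₀ γ h)]
  simp only [List.length_append]
  rcases hR with h | h <;> have := List.length_pos_iff.2 h <;> omega

theorem pair_induction_on_min {P : List L → List L → Prop} (nil : P [] [])
    (step : ∀ A B : List L,
      (∀ A' B' : List L, A'.length + B'.length < A.length + B.length → P A' B') →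
      ∀ γ ∈ A ++ B, (∀ β ∈ A ++ B, γ ≤ β) → P A B)
    (A B : List L) : P A B := by
  induction hn : A.length + B.length using Nat.strong_induction_on generalizing A B with
  | _ n IH =>
    rcases eq_or_ne (A ++ B) [] with h | h
    · obtain ⟨rfl, rfl⟩ := List.append_eq_nil_iff.1 h
      exact nil
    · exact step A B (fun A' B' hlt => IH _ (hn ▸ hlt) A' B' rfl) _ (List.min_mem h)
        fun β hβ => List.min_le_of_mem hβ

def Trichotomy (γ : L) (A B : List L) : Prop :=
  ((worm A ⟹ worm B) ∧ (worm B ⟹ worm A)) ∨ Lt γ A B ∨ Lt γ B A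

theorem Trichotomy.of_le (hγδ : γ ≤ δ) (h : Trichotomy δ A B) : Trichotomy γ A B := by
  rcases h with h | h | h
  · exact Or.inl h
  · exact Or.inr (Or.inl (imp_trans h (dia_anti _ hγδ)))
  · exact Or.inr (Or.inr (imp_trans h (dia_anti _ hγδ)))

theorem lt_or_imp_of_trichotomy_tail (hA : ∀ β ∈ A₀ ++ R, γ ≤ β) (hA₀ : ∀ β ∈ A₀, γ < β)
    (hR : ∀ ρ ∈ R.head?, ρ ≤ γ) (htail : R ≠ [] → Trichotomy γ R.tail B) :
    Lt γ B (A₀ ++ R) ∨ (worm B ⟹ worm R) := by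
  rcases R with _ | ⟨ρ, A₁⟩
  · exact Or.inr (imp_top _)
  obtain rfl : ρ = γ := le_antisymm (hR ρ rfl) (hA ρ (by simp))
  have hA₁ : worm (A₀ ++ ρ :: A₁) ⟹ dia ρ (worm A₁) := worm_append_imp_right hA₀ hR
  rcases htail (List.cons_ne_nil _ _) with ⟨h, -⟩ | h | h
  · exact Or.inl (imp_trans hA₁ (dia_mono ρ h))
  · exact Or.inr h
  · exact Or.inl (imp_trans hA₁ (imp_trans (dia_mono ρ h) (dia_dia_of_le _ le_rfl)))

theorem trichotomy_append (hγδ : γ < δ) (hA₀ : ∀ β ∈ A₀, γ < β) (hB₀ : ∀ β ∈ B₀, γ < β)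
    (hRA : ∀ ρ ∈ RA.head?, ρ ≤ γ) (hRB : ∀ ρ ∈ RB.head?, ρ ≤ γ)
    (hAB : worm (A₀ ++ RA) ⟹ worm RB) (hBA : worm (B₀ ++ RB) ⟹ worm RA)
    (h : Trichotomy δ A₀ B₀) : Trichotomy γ (A₀ ++ RA) (B₀ ++ RB) := by
  have hA := worm_append_imp_left A₀ RA
  have hB := worm_append_imp_left B₀ RB
  rcases h with ⟨h₁, h₂⟩ | h | h
  · exact Or.inl ⟨imp_worm_append hB₀ hRB (imp_trans hA h₁) hAB,
      imp_worm_append hA₀ hRA (imp_trans hB h₂) hBA⟩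
  · exact Or.inr (Or.inl (imp_dia_worm_append hγδ hA₀ hRA (imp_trans hB h) hBA))
  · exact Or.inr (Or.inr (imp_dia_worm_append hγδ hB₀ hRB (imp_trans hA h) hAB))

theorem trichotomy_of_mem
    (IH : ∀ A' B' : List L, A'.length + B'.length < A.length + B.length →
      ∀ γ, (∀ β ∈ A', γ ≤ β) → (∀ β ∈ B', γ ≤ β) → Trichotomy γ A' B')
    (hγ : γ ∈ A ++ B) (hA : ∀ β ∈ A, γ ≤ β) (hB : ∀ β ∈ B, γ ≤ β) : Trichotomy γ A B := by
  obtain ⟨A₀, RA, rfl, hA₀, hRA⟩ := exists_split hA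
  obtain ⟨B₀, RB, rfl, hB₀, hRB⟩ := exists_split hB
  have tail_lt {X₀ R : List L} (h : R ≠ []) : R.tail.length < (X₀ ++ R).length := by
    simp only [List.length_tail, List.length_append]
    have := List.length_pos_iff.2 h
    omega
  have tail_le {X₀ R : List L} (hX : ∀ β ∈ X₀ ++ R, γ ≤ β) : ∀ β ∈ R.tail, γ ≤ β :=
    fun β hβ => hX β (List.mem_append_right _ (List.mem_of_mem_tail hβ))
  rcases lt_or_imp_of_trichotomy_tail hA hA₀ hRA
    (fun h => IH _ _ (by have := tail_lt (X₀ := A₀) h; omega) γ (tail_le hA) hB) with hlt | hBA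
  · exact Or.inr (Or.inr hlt)
  rcases lt_or_imp_of_trichotomy_tail hB hB₀ hRB
    (fun h => IH _ _ (by have := tail_lt (X₀ := B₀) h; omega) γ (tail_le hB) hA) with hlt | hAB
  · exact Or.inr (Or.inl hlt)
  rcases eq_or_ne (A₀ ++ B₀) [] with h₀ | h₀
  · obtain ⟨rfl, rfl⟩ := List.append_eq_nil_iff.1 h₀
    exact Or.inl ⟨hAB, hBA⟩
  have hδ : ∀ β ∈ A₀ ++ B₀, (A₀ ++ B₀).min h₀ ≤ β := fun β hβ => List.min_le_of_mem hβ
  have hγδ : γ < (A₀ ++ B₀).min h₀ :=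
    (List.mem_append.1 (List.min_mem h₀)).elim (hA₀ _) (hB₀ _)
  exact trichotomy_append hγδ hA₀ hB₀ hRA hRB hAB hBA
    (IH A₀ B₀ (length_add_length_lt hA₀ hB₀ hγ) _
      (fun β hβ => hδ β (List.mem_append_left _ hβ)) (fun β hβ => hδ β (List.mem_append_right _ hβ)))

theorem trichotomy (hA : ∀ β ∈ A, γ ≤ β) (hB : ∀ β ∈ B, γ ≤ β) : Trichotomy γ A B := by
  refine pair_induction_on_min (P := fun A B => ∀ γ : L, (∀ β ∈ A, γ ≤ β) → (∀ β ∈ B, γ ≤ β) →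
    Trichotomy γ A B) (fun _ _ _ => Or.inl ⟨imp_refl _, imp_refl _⟩) ?_ A B γ hA hB
  intro A B IH δ hδ hmin γ hA hB
  have hγδ : γ ≤ δ := (List.mem_append.1 hδ).elim (hA δ) (hB δ)
  exact (trichotomy_of_mem IH hδ (fun β hβ => hmin β (List.mem_append_left _ hβ))
    (fun β hβ => hmin β (List.mem_append_right _ hβ))).of_le hγδ

theorem imp_or_imp_of_head_le (hRA : ∀ β ∈ RA, γ ≤ β) (hRB : ∀ β ∈ RB, γ ≤ β)
    (hRA' : ∀ ρ ∈ RA.head?, ρ ≤ γ) (hRB' : ∀ ρ ∈ RB.head?, ρ ≤ γ) :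
    (worm RA ⟹ worm RB) ∨ (worm RB ⟹ worm RA) := by
  rcases trichotomy hRA hRB with ⟨h, -⟩ | h | h
  · exact Or.inl h
  · exact Or.inr (imp_trans h (dia_worm_imp_of_head_le hRA'))
  · exact Or.inl (imp_trans h (dia_worm_imp_of_head_le hRB'))

def IsConjWorm (A B C : List L) : Prop :=
  C ⊆ A ++ B ∧ (worm C ⟹ (worm A).and (worm B)) ∧ ((worm A).and (worm B) ⟹ worm C)

theorem IsConjWorm.symm {C : List L} (h : IsConjWorm A B C) : IsConjWorm B A C :=
  ⟨fun _ hβ => List.mem_append.2 (List.mem_append.1 (h.1 hβ)).symm,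
    imp_trans h.2.1 (imp_and (and_right _ _) (and_left _ _)),
    imp_trans (imp_and (and_right _ _) (and_left _ _)) h.2.2⟩

theorem isConjWorm_append {C₀ : List L} (hA₀ : ∀ β ∈ A₀, γ < β) (hB₀ : ∀ β ∈ B₀, γ < β)
    (hRA : ∀ ρ ∈ RA.head?, ρ ≤ γ) (hRB : ∀ ρ ∈ RB.head?, ρ ≤ γ)
    (hC : IsConjWorm A₀ B₀ C₀) (hR : worm RA ⟹ worm RB) :
    IsConjWorm (A₀ ++ RA) (B₀ ++ RB) (C₀ ++ RA) := by
  obtain ⟨hsub, hC₁, hC₂⟩ := hC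
  have hC₀ : ∀ β ∈ C₀, γ < β := fun β hβ => (List.mem_append.1 (hsub hβ)).elim (hA₀ β) (hB₀ β)
  have hC : worm (C₀ ++ RA) ⟹ (worm A₀).and (worm B₀) :=
    imp_trans (worm_append_imp_left _ _) hC₁
  have hRA₁ : worm (C₀ ++ RA) ⟹ worm RA := worm_append_imp_right hC₀ hRA
  have hAB : (worm (A₀ ++ RA)).and (worm (B₀ ++ RB)) ⟹ (worm A₀).and (worm B₀) :=
    imp_and (imp_trans (and_left _ _) (worm_append_imp_left _ _))
      (imp_trans (and_right _ _) (worm_append_imp_left _ _))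
  refine ⟨?_, imp_and ?_ ?_, ?_⟩
  · intro β hβ
    simp only [List.mem_append] at hβ ⊢
    rcases hβ with hβ | hβ
    · have := List.mem_append.1 (hsub hβ)
      tauto
    · tauto
  · exact imp_worm_append hA₀ hRA (imp_trans hC (and_left _ _)) hRA₁
  · exact imp_worm_append hB₀ hRB (imp_trans hC (and_right _ _)) (imp_trans hRA₁ hR)
  · exact imp_worm_append hC₀ hRA (imp_trans hAB hC₂)
      (imp_trans (and_left _ _) (worm_append_imp_right hA₀ hRA))

theorem exists_isConjWorm_of_mem
    (IH : ∀ A' B' : List L, A'.length + B'.length < A.length + B.length →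
      ∃ C, IsConjWorm A' B' C)
    (hγ : γ ∈ A ++ B) (hmin : ∀ β ∈ A ++ B, γ ≤ β) : ∃ C, IsConjWorm A B C := by
  have hA : ∀ β ∈ A, γ ≤ β := fun β hβ => hmin β (List.mem_append_left _ hβ)
  have hB : ∀ β ∈ B, γ ≤ β := fun β hβ => hmin β (List.mem_append_right _ hβ)
  obtain ⟨A₀, RA, rfl, hA₀, hRA⟩ := exists_split hA
  obtain ⟨B₀, RB, rfl, hB₀, hRB⟩ := exists_split hB
  obtain ⟨C₀, hC₀⟩ := IH A₀ B₀ (length_add_length_lt hA₀ hB₀ hγ)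
  rcases imp_or_imp_of_head_le (fun β hβ => hA β (List.mem_append_right _ hβ))
    (fun β hβ => hB β (List.mem_append_right _ hβ)) hRA hRB with h | h
  · exact ⟨_, isConjWorm_append hA₀ hB₀ hRA hRB hC₀ h⟩
  · exact ⟨_, (isConjWorm_append hB₀ hA₀ hRB hRA hC₀.symm h).symm⟩

theorem exists_isConjWorm (A B : List L) : ∃ C, IsConjWorm A B C :=
  pair_induction_on_min ⟨[], List.Subset.refl _, imp_and (imp_refl _) (imp_refl _), and_left _ _⟩
    (fun _ _ IH _ hγ hmin => exists_isConjWorm_of_mem IH hγ hmin) A B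

theorem and_imp_dia_of_not_imp {α : L} (hA : ∀ β ∈ A, α ≤ β) (hB : ∀ β ∈ B, α ≤ β)
    (hirr : ¬ Lt α A A) (hAB : ¬ (worm A ⟹ worm B)) :
    (worm A).and (worm B) ⟹ dia α (worm A) := by
  obtain ⟨C, hsub, hC₁, hC₂⟩ := exists_isConjWorm A B
  have hC : ∀ β ∈ C, α ≤ β := fun β hβ => (List.mem_append.1 (hsub hβ)).elim (hA β) (hB β)
  rcases trichotomy hC hA with ⟨-, hAC⟩ | hCA | hAC
  · exact absurd (imp_trans hAC (imp_trans hC₁ (and_right _ _))) hAB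
  · exact absurd (imp_trans hCA (dia_mono α (imp_trans hC₁ (and_left _ _)))) hirr
  · exact imp_trans hC₂ hAC

end Worm

/-- Assuming irreflexivity, if `A, A₁, …, A_I ∈ 𝕎_α` and for each `i`,
`GLP ⊬ A → A_i`, then `GLP ⊢ (A ∧ ⋁ᵢ A_i) → ⟨α⟩A`. -/
theorem adding_worms_increases_order {L : Type} [LinearOrder L] (α : L)
    (irrefl : ∀ (D : List L) (γ : L), ¬ GLP ((worm D).imp (Formula.dia γ (worm D))))
    (A : List L) (As : List (List L))
    (hAm : ∀ β ∈ A, α ≤ β) (hAsm : ∀ Ai ∈ As, ∀ β ∈ Ai, α ≤ β)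
    (hnp : ∀ Ai ∈ As, ¬ GLP ((worm A).imp (worm Ai))) :
    GLP (((worm A).and (disjWorms As)).imp (Formula.dia α (worm A))) := by
  induction As with
  | nil => exact GLP.imp_trans (GLP.and_right _ _) (GLP.bot_imp _)
  | cons Ai As ih =>
    exact GLP.and_or_imp
      (Worm.and_imp_dia_of_not_imp hAm (hAsm Ai (by simp)) (irrefl A α) (hnp Ai (by simp)))
      (ih (fun X hX => hAsm X (by simp [hX])) (fun X hX => hnp X (by simp [hX])))
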